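/- Let S be a finite p-group, A = ℤ[ζ] the subring of ℂ generated by a primitive |S|-th root of unity ζ, and 𝔭 a nonzero prime ideal of A with 𝔭 ∩ ℤ = pℤ. Then for every complex character χ of a finite-dimensional representation of S and every s ∈ S, χ(s) ≡ χ(1) modulo 𝔭. -/

import Mathlib

/-!
The character value `χ(s)` is the trace of `ρ(s)`, i.e. the sum of `dim V` eigenvalues, each an
`|S|`-th root of unity and hence a power of `ζ` lying in `A`. As `|S| = p ^ n` and `A ⧸ 𝔭` has
characteristic `p`, the Frobenius gives `(ε - 1) ^ p ^ n ≡ ε ^ p ^ n - 1 = 0 mod 𝔭` for each such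
eigenvalue `ε`, so `ε ≡ 1` and `χ(s) ≡ dim V = χ(1) mod 𝔭`.
-/

theorem Ideal.sub_one_mem_of_pow_prime_pow_eq_one {R : Type*} [CommRing R] {p : ℕ}
    [Fact p.Prime] {P : Ideal R} [P.IsPrime] (hpP : (p : R) ∈ P) {a : R} {n : ℕ}
    (ha : a ^ p ^ n = 1) : a - 1 ∈ P := by
  have : CharP (R ⧸ P) p := (CharP.charP_iff_prime_eq_zero Fact.out).mpr
    (by rw [← map_natCast (Ideal.Quotient.mk P), Ideal.Quotient.eq_zero_iff_mem]; exact hpP)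
  rw [← Ideal.Quotient.eq, ← iterateFrobenius_inj (R ⧸ P) p n |>.eq_iff]
  simp [iterateFrobenius_def, ← map_pow, ha]

theorem Ideal.multiset_sum_sub_card_mem {R : Type*} [CommRing R] {I : Ideal R}
    {t : Multiset R} (ht : ∀ a ∈ t, a - 1 ∈ I) : t.sum - t.card ∈ I := by
  induction t using Multiset.induction with
  | empty => simp
  | cons a t ih =>
    rw [Multiset.sum_cons, Multiset.card_cons, Nat.cast_succ, add_comm _ (1 : R),
      add_sub_add_comm]
    exact I.add_mem (ht a (t.mem_cons_self a))
      (ih fun b hb => ht b (Multiset.mem_cons_of_mem hb))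

theorem Module.End.pow_eq_one_of_isRoot_charpoly {R M : Type*} [CommRing R] [IsDomain R]
    [AddCommGroup M] [Module R M] [Module.Free R M] [Module.Finite R M] {f : End R M} {m : ℕ}
    (hf : f ^ m = 1) {μ : R} (hμ : f.charpoly.IsRoot μ) : μ ^ m = 1 := by
  obtain ⟨v, hv⟩ := ((hasEigenvalue_iff_isRoot_charpoly f μ).mpr hμ).exists_hasEigenvector
  have hv' := hv.pow_apply m
  rw [hf, one_apply] at hv'
  exact smul_left_injective R hv.2 (by simpa using hv'.symm)

theorem Module.End.exists_trace_eq_sum_rootsOfUnity {K V : Type*} [Field K] [IsAlgClosed K]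
    [AddCommGroup V] [Module K V] [FiniteDimensional K V] {f : End K V} {m : ℕ}
    (hf : f ^ m = 1) :
    ∃ t : Multiset K, t.card = Module.finrank K V ∧ (∀ μ ∈ t, μ ^ m = 1) ∧
      LinearMap.trace K V f = t.sum := by
  have hsplit := IsAlgClosed.splits f.charpoly
  refine ⟨f.charpoly.roots, ?_, fun μ hμ => pow_eq_one_of_isRoot_charpoly hf
    (Polynomial.isRoot_of_mem_roots hμ), trace_eq_sum_roots_charpoly_of_splits hsplit⟩
  rw [← hsplit.natDegree_eq_card_roots, LinearMap.charpoly_natDegree]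

theorem FDRep.exists_character_eq_sum_rootsOfUnity {K G : Type*} [Field K] [IsAlgClosed K]
    [Group G] [Fintype G] (V : FDRep K G) (g : G) :
    ∃ t : Multiset K, t.card = Module.finrank K V ∧ (∀ μ ∈ t, μ ^ Fintype.card G = 1) ∧
      V.character g = t.sum :=
  Module.End.exists_trace_eq_sum_rootsOfUnity (by rw [← map_pow, pow_card_eq_one, map_one])

theorem IsPrimitiveRoot.mem_of_pow_eq_one {R : Type*} [CommRing R] [IsDomain R] {ζ : R}
    {k : ℕ} [NeZero k] (hζ : IsPrimitiveRoot ζ k) {A : Subring R} (hζA : ζ ∈ A) {μ : R}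
    (hμ : μ ^ k = 1) : μ ∈ A := by
  obtain ⟨i, -, rfl⟩ := hζ.eq_pow_of_pow_eq_one hμ
  exact A.pow_mem hζA i

theorem character_congruent_dim_mod_prime_general (p : ℕ) (hp : p.Prime) (S : Type) [Group S]
    [Fintype S] (hS : IsPGroup p S) (ζ : ℂ) (hζ : IsPrimitiveRoot ζ (Fintype.card S))
    (A : Subring ℂ) (hA : A = (Algebra.adjoin ℤ ({ζ} : Set ℂ)).toSubring)
    (𝔭 : Ideal A) (h𝔭 : 𝔭.IsPrime)
    (hover : 𝔭.comap (algebraMap ℤ A) = Ideal.span {(p : ℤ)})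
    (V : FDRep ℂ S) (s : S) :
    ∃ a b : A, (a : ℂ) = V.character s ∧ (b : ℂ) = V.character 1 ∧ a - b ∈ 𝔭 := by
  have : Fact p.Prime := ⟨hp⟩
  obtain ⟨n, hn⟩ := IsPGroup.iff_card.mp hS
  rw [Nat.card_eq_fintype_card] at hn
  have hp𝔭 : (p : A) ∈ 𝔭 := by
    rw [← Int.cast_natCast, ← eq_intCast (algebraMap ℤ A), ← Ideal.mem_comap, hover]
    exact Ideal.mem_span_singleton_self _
  have hζA : ζ ∈ A := hA ▸ Algebra.subset_adjoin rfl
  obtain ⟨t, ht_card, ht_pow, ht_sum⟩ := V.exists_character_eq_sum_rootsOfUnity s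
  lift t to Multiset A using fun μ hμ => hζ.mem_of_pow_eq_one hζA (ht_pow μ hμ)
  refine ⟨t.sum, t.card, by simp [ht_sum], by simp [← ht_card], ?_⟩
  refine Ideal.multiset_sum_sub_card_mem fun a ha =>
    Ideal.sub_one_mem_of_pow_prime_pow_eq_one hp𝔭 (n := n) (Subtype.ext ?_)
  simpa [← hn] using ht_pow a (Multiset.mem_map_of_mem _ ha)

/-- For a finite `p`-group `S`, `A = ℤ[ζ]` the subring of `ℂ` generated by a primitive
`|S|`-th root of unity, and `𝔭` a nonzero prime ideal of `A` lying over `pℤ`, every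
complex character `χ` of a finite-dimensional representation of `S` satisfies
`χ(s) ≡ χ(1) mod 𝔭`. -/
theorem character_congruent_dim_mod_prime (p : ℕ) (hp : p.Prime) (S : Type) [Group S]
    [Fintype S] (hS : IsPGroup p S) (ζ : ℂ) (hζ : IsPrimitiveRoot ζ (Fintype.card S))
    (A : Subring ℂ) (hA : A = (Algebra.adjoin ℤ ({ζ} : Set ℂ)).toSubring)
    (𝔭 : Ideal A) (h𝔭 : 𝔭.IsPrime) (hne : 𝔭 ≠ ⊥)
    (hover : 𝔭.comap (algebraMap ℤ A) = Ideal.span {(p : ℤ)})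
    (V : FDRep ℂ S) (s : S) :
    ∃ a b : A, (a : ℂ) = V.character s ∧ (b : ℂ) = V.character 1 ∧ a - b ∈ 𝔭 :=
  character_congruent_dim_mod_prime_general p hp S hS ζ hζ A hA 𝔭 h𝔭 hover V s
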